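/- Let g : [a,b] → ℝ be continuously differentiable with g(a) = g(b) = 0, and suppose the support of g is contained in the union of two disjoint measurable sets Z ∪ L ⊆ [a,b]. Then for every t ∈ [a,b], g(t)² ≤ 2 |Z| ∫_Z g'(s)² ds + 2 |L| ∫_L g'(s)² ds, where |Z|, |L| denote Lebesgue measure. -/

import Mathlib

/-!
Let `c` be the last zero of `g` in `[a, t]`. Then `(c, t]` lies in the support of `g`, hence in
`Z ∪ L`, and the fundamental theorem of calculus on `[c, t]` gives
`|g t| ≤ ∫_Z |g'| + ∫_L |g'|`. Squaring with `(x + y)² ≤ 2 (x² + y²)` and applying Cauchy–Schwarz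
`(∫_A |g'|)² ≤ |A| ∫_A g'²` on `Z` and on `L` gives the bound.
-/

open MeasureTheory Set

lemma sq_integral_abs_le_measureReal_univ_mul_integral_sq {α : Type*} [MeasurableSpace α]
    {μ : Measure α} [IsFiniteMeasure μ] {f : α → ℝ} (hf : MemLp f 2 μ) :
    (∫ x, |f x| ∂μ) ^ 2 ≤ μ.real univ * ∫ x, f x ^ 2 ∂μ := by
  have holder := integral_mul_le_Lp_mul_Lq_of_nonneg (μ := μ) Real.HolderConjugate.two_two
    (f := fun _ => (1 : ℝ)) (g := fun x => |f x|) (ae_of_all _ fun _ => zero_le_one)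
    (ae_of_all _ fun x => abs_nonneg (f x)) (by simpa using memLp_const (1 : ℝ))
    (by rw [ENNReal.ofReal_ofNat]; exact hf.abs)
  simp only [one_mul, one_pow, mul_one, integral_const, smul_eq_mul, Real.rpow_two, sq_abs,
    ← Real.sqrt_eq_rpow] at holder
  rw [← Real.sqrt_mul measureReal_nonneg] at holder
  exact (Real.le_sqrt (by positivity) (by positivity)).1 holder

lemma exists_eq_zero_Ioc_subset_support {g : ℝ → ℝ} {a t : ℝ} (hat : a ≤ t)
    (hg : ContinuousOn g (Icc a t)) (hga : g a = 0) :
    ∃ c ∈ Icc a t, g c = 0 ∧ Ioc c t ⊆ Function.support g := by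
  set K := Icc a t ∩ g ⁻¹' {0}
  have hK : IsCompact K :=
    isCompact_Icc.of_isClosed_subset (hg.preimage_isClosed_of_isClosed isClosed_Icc
      isClosed_singleton) inter_subset_left
  obtain ⟨hcK, hc0⟩ : sSup K ∈ K := hK.sSup_mem ⟨a, ⟨le_rfl, hat⟩, hga⟩
  refine ⟨sSup K, hcK, hc0, fun x hx hgx => hx.1.not_ge ?_⟩
  exact le_csSup hK.bddAbove ⟨⟨hcK.1.trans hx.1.le, hx.2⟩, hgx⟩

lemma abs_le_setIntegral_abs_deriv_of_support_subset {g g' : ℝ → ℝ} {a t : ℝ} {S : Set ℝ}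
    (hat : a ≤ t) (hderiv : ∀ x ∈ Icc a t, HasDerivAt g (g' x) x)
    (hg' : IntegrableOn g' (Icc a t)) (hga : g a = 0) (hsupp : Function.support g ⊆ S)
    (hg'S : IntegrableOn g' S) :
    |g t| ≤ ∫ x in S, |g' x| := by
  obtain ⟨c, ⟨hac, hct⟩, hgc, hcS⟩ := exists_eq_zero_Ioc_subset_support hat
    (fun x hx => (hderiv x hx).continuousAt.continuousWithinAt) hga
  have hIcc : Icc c t ⊆ Icc a t := Icc_subset_Icc_left hac
  have ftc : ∫ x in c..t, g' x = g t := by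
    rw [intervalIntegral.integral_eq_sub_of_hasDerivAt
      (fun x hx => hderiv x (hIcc (uIcc_of_le hct ▸ hx)))
      ((hg'.mono_set (uIcc_of_le hct ▸ hIcc)).intervalIntegrable), hgc, sub_zero]
  calc |g t| ≤ ∫ x in c..t, |g' x| := ftc ▸ intervalIntegral.abs_integral_le_integral_abs hct
    _ = ∫ x in Ioc c t, |g' x| := intervalIntegral.integral_of_le hct
    _ ≤ ∫ x in S, |g' x| :=
      setIntegral_mono_set hg'S.abs (ae_of_all _ fun x => abs_nonneg _)
        (hcS.trans hsupp).eventuallyLE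

theorem stmt4_general (a b : ℝ) (g g' : ℝ → ℝ)
    (hderiv : ∀ x ∈ Set.Icc a b, HasDerivAt g (g' x) x)
    (hcont : ContinuousOn g' (Set.Icc a b))
    (hga : g a = 0)
    (Z L : Set ℝ) (hL : MeasurableSet L)
    (hdisj : Disjoint Z L) (hsub : Z ∪ L ⊆ Set.Icc a b)
    (hsupp : Function.support g ⊆ Z ∪ L) :
    ∀ t ∈ Set.Icc a b,
      (g t) ^ 2 ≤ 2 * (volume Z).toReal * (∫ s in Z, (g' s) ^ 2)
        + 2 * (volume L).toReal * (∫ s in L, (g' s) ^ 2) := by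
  intro t ⟨hat, htb⟩
  have hg'_int : IntegrableOn g' (Icc a b) := hcont.integrableOn_Icc
  have hg'_L2 : MemLp g' 2 (volume.restrict (Icc a b)) :=
    (memLp_two_iff_integrable_sq hg'_int.aestronglyMeasurable).2 (hcont.pow 2).integrableOn_Icc
  have cauchy_schwarz : ∀ s ⊆ Icc a b,
      (∫ x in s, |g' x|) ^ 2 ≤ (volume s).toReal * ∫ x in s, g' x ^ 2 := by
    intro s hs
    have : IsFiniteMeasure (volume.restrict s) :=
      isFiniteMeasure_restrict.2 ((measure_mono hs).trans_lt measure_Icc_lt_top).ne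
    simpa [measureReal_def] using sq_integral_abs_le_measureReal_univ_mul_integral_sq
      (hg'_L2.mono_measure (Measure.restrict_mono hs le_rfl))
  have hZsub : Z ⊆ Icc a b := subset_union_left.trans hsub
  have hLsub : L ⊆ Icc a b := subset_union_right.trans hsub
  have pointwise : |g t| ≤ (∫ x in Z, |g' x|) + ∫ x in L, |g' x| := by
    rw [← setIntegral_union hdisj hL (hg'_int.mono_set hZsub).abs (hg'_int.mono_set hLsub).abs]
    exact abs_le_setIntegral_abs_deriv_of_support_subset hat
      (fun x hx => hderiv x (Icc_subset_Icc_right htb hx))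
      (hg'_int.mono_set (Icc_subset_Icc_right htb)) hga hsupp (hg'_int.mono_set hsub)
  calc g t ^ 2 = |g t| ^ 2 := (sq_abs _).symm
    _ ≤ ((∫ x in Z, |g' x|) + ∫ x in L, |g' x|) ^ 2 := by gcongr
    _ ≤ 2 * ((∫ x in Z, |g' x|) ^ 2 + (∫ x in L, |g' x|) ^ 2) := add_sq_le
    _ ≤ _ := by linarith [cauchy_schwarz Z hZsub, cauchy_schwarz L hLsub]

/-- Key pointwise estimate in the weak comparison principle: if `g` is `C¹` on
`[a,b]`, vanishes at both endpoints, and its support is contained in the union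
of two disjoint measurable sets `Z ∪ L ⊆ [a,b]`, then for every `t ∈ [a,b]`
`g(t)² ≤ 2|Z| ∫_Z g'² + 2|L| ∫_L g'²`. -/
theorem stmt4 (a b : ℝ) (hab : a ≤ b) (g g' : ℝ → ℝ)
    (hderiv : ∀ x ∈ Set.Icc a b, HasDerivAt g (g' x) x)
    (hcont : ContinuousOn g' (Set.Icc a b))
    (hga : g a = 0) (hgb : g b = 0)
    (Z L : Set ℝ) (hZ : MeasurableSet Z) (hL : MeasurableSet L)
    (hdisj : Disjoint Z L) (hsub : Z ∪ L ⊆ Set.Icc a b)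
    (hsupp : Function.support g ⊆ Z ∪ L) :
    ∀ t ∈ Set.Icc a b,
      (g t) ^ 2 ≤ 2 * (volume Z).toReal * (∫ s in Z, (g' s) ^ 2)
        + 2 * (volume L).toReal * (∫ s in L, (g' s) ^ 2) :=
  stmt4_general a b g g' hderiv hcont hga Z L hL hdisj hsub hsupp
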